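/- Let N ≥ 2. The average of the gate-typicality g_t(U) over U drawn from the Haar probability measure on the unitary group U(N²) (acting on ℂ^N ⊗ ℂ^N) equals 1. -/

import Mathlib

open Matrix MeasureTheory
open scoped Kronecker

noncomputable section

instance {m n R : Type*} [TopologicalSpace R] : MeasurableSpace (Matrix m n R) := borel _
instance {m n R : Type*} [TopologicalSpace R] : BorelSpace (Matrix m n R) := ⟨rfl⟩

/-- Reshuffling: `(U_R)_{(i,j),(α,β)} = U_{(i,α),(j,β)}`. -/
def reshuffle (N : ℕ) (U : Matrix (Fin N × Fin N) (Fin N × Fin N) ℂ) :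
    Matrix (Fin N × Fin N) (Fin N × Fin N) ℂ :=
  Matrix.of fun p q => U (p.1, q.1) (p.2, q.2)

/-- Partial transpose: `(U_Γ)_{(j,α),(i,β)} = U_{(i,α),(j,β)}`. -/
def ptransp (N : ℕ) (U : Matrix (Fin N × Fin N) (Fin N × Fin N) ℂ) :
    Matrix (Fin N × Fin N) (Fin N × Fin N) ℂ :=
  Matrix.of fun p q => U (q.1, p.2) (p.1, q.2)

/-- The swap gate `S(x ⊗ y) = y ⊗ x`. -/
def swapGate (N : ℕ) : Matrix (Fin N × Fin N) (Fin N × Fin N) ℂ :=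
  Matrix.of fun p q => if p.1 = q.2 ∧ p.2 = q.1 then 1 else 0

/-- `ρ_R(U) = U_R U_R† / N²`. -/
def rhoR (N : ℕ) (U : Matrix (Fin N × Fin N) (Fin N × Fin N) ℂ) :
    Matrix (Fin N × Fin N) (Fin N × Fin N) ℂ :=
  ((N : ℂ) ^ 2)⁻¹ • (reshuffle N U * (reshuffle N U)ᴴ)

/-- `ρ_T(U) = S U_Γ U_Γ† S / N²`. -/
def rhoT (N : ℕ) (U : Matrix (Fin N × Fin N) (Fin N × Fin N) ℂ) :
    Matrix (Fin N × Fin N) (Fin N × Fin N) ℂ :=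
  ((N : ℂ) ^ 2)⁻¹ • (swapGate N * (ptransp N U * (ptransp N U)ᴴ) * swapGate N)

/-- Purity `X(U) = tr(ρ_R(U)²)` (a real number). -/
def Xpur (N : ℕ) (U : Matrix (Fin N × Fin N) (Fin N × Fin N) ℂ) : ℝ :=
  ((rhoR N U * rhoR N U).trace).re

/-- Purity `Y(U) = tr(ρ_T(U)²)` (a real number). -/
def Ypur (N : ℕ) (U : Matrix (Fin N × Fin N) (Fin N × Fin N) ℂ) : ℝ :=
  ((rhoT N U * rhoT N U).trace).re

/-- Entangling power `e_p(U)`. -/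
def ep (N : ℕ) (U : Matrix (Fin N × Fin N) (Fin N × Fin N) ℂ) : ℝ :=
  ((N : ℝ) ^ 2 / ((N : ℝ) + 1) ^ 2) *
    ((1 - Xpur N U) + (1 - Ypur N U) - ((N : ℝ) ^ 2 - 1) / (N : ℝ) ^ 2)

/-- Gate typicality `g_t(U)`. -/
def gateTyp (N : ℕ) (U : Matrix (Fin N × Fin N) (Fin N × Fin N) ℂ) : ℝ :=
  ((N : ℝ) ^ 2 / ((N : ℝ) ^ 2 - 1)) *
    (Ypur N U - Xpur N U + ((N : ℝ) ^ 2 - 1) / (N : ℝ) ^ 2)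

/-- Mean entangling power over the Haar measure, `ē_p = (N-1)²/(N²+1)`. -/
def epBar (N : ℕ) : ℝ := ((N : ℝ) - 1) ^ 2 / ((N : ℝ) ^ 2 + 1)

/-- `iterGate U W k = U · W_{k-1} · U ⋯ W_0 · U`, i.e. `U^(k+1)` with `k` interlacing
local gates `W_0, …, W_{k-1}`. -/
def iterGate {D : Type*} [Fintype D] [DecidableEq D] (U : Matrix D D ℂ)
    (W : ℕ → Matrix D D ℂ) : ℕ → Matrix D D ℂ
  | 0 => U
  | k + 1 => U * W k * iterGate U W k

/-!
Conjugating by the swap gate turns the partial transpose into a reshuffle,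
`U_Γ = S (S U)_R`, so `ρ_T(U) = ρ_R(S U)` and `Y(U) = X(S U)`. As `S` is unitary, left
invariance of Haar measure gives `𝔼 Y = 𝔼 X`, and the average of `g_t` is what remains of the
constant term, `N²/(N²-1) · (N²-1)/N² = 1`.
-/

theorem swapGate_mul_apply (N : ℕ) (M : Matrix (Fin N × Fin N) (Fin N × Fin N) ℂ)
    (p q : Fin N × Fin N) : (swapGate N * M) p q = M p.swap q := by
  rw [mul_apply, Finset.sum_eq_single p.swap]
  · simp [swapGate]
  · rintro r - hr
    have : ¬(p.1 = r.2 ∧ p.2 = r.1) := fun h => hr (Prod.ext h.2.symm h.1.symm)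
    simp [swapGate, this]
  · simp

theorem conjTranspose_swapGate (N : ℕ) : (swapGate N)ᴴ = swapGate N := by
  ext p q
  simp only [conjTranspose_apply, swapGate, of_apply, eq_comm (a := q.1), eq_comm (a := q.2),
    and_comm]
  split <;> simp

theorem swapGate_mul_self (N : ℕ) : swapGate N * swapGate N = 1 := by
  ext p q
  rw [swapGate_mul_apply]
  simp [swapGate, one_apply, Prod.ext_iff, and_comm]

theorem swapGate_mem_unitaryGroup (N : ℕ) : swapGate N ∈ unitaryGroup (Fin N × Fin N) ℂ := by
  rw [mem_unitaryGroup_iff, star_eq_conjTranspose, conjTranspose_swapGate, swapGate_mul_self]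

theorem ptransp_eq_swapGate_mul_reshuffle (N : ℕ)
    (U : Matrix (Fin N × Fin N) (Fin N × Fin N) ℂ) :
    ptransp N U = swapGate N * reshuffle N (swapGate N * U) := by
  ext p q
  simp [swapGate_mul_apply, ptransp, reshuffle]

theorem rhoT_eq_rhoR_swapGate_mul (N : ℕ) (U : Matrix (Fin N × Fin N) (Fin N × Fin N) ℂ) :
    rhoT N U = rhoR N (swapGate N * U) := by
  rw [rhoT, rhoR, ptransp_eq_swapGate_mul_reshuffle, conjTranspose_mul, conjTranspose_swapGate]
  set S := swapGate N
  set R := reshuffle N (S * U)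
  calc (N ^ 2 : ℂ)⁻¹ • (S * (S * R * (Rᴴ * S)) * S)
      = (N ^ 2 : ℂ)⁻¹ • ((S * S) * (R * Rᴴ) * (S * S)) := by noncomm_ring
    _ = (N ^ 2 : ℂ)⁻¹ • (R * Rᴴ) := by rw [swapGate_mul_self, one_mul, mul_one]

theorem Ypur_eq_Xpur_swapGate_mul (N : ℕ) (U : Matrix (Fin N × Fin N) (Fin N × Fin N) ℂ) :
    Ypur N U = Xpur N (swapGate N * U) := by
  rw [Ypur, Xpur, rhoT_eq_rhoR_swapGate_mul]

theorem continuous_Xpur (N : ℕ) : Continuous (Xpur N) := by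
  have hR : Continuous (reshuffle N) :=
    continuous_matrix fun p q => continuous_id.matrix_elem _ _
  have hρ : Continuous (rhoR N) :=
    (hR.matrix_mul hR.matrix_conjTranspose).const_smul ((N : ℂ) ^ 2)⁻¹
  exact Complex.continuous_re.comp (hρ.matrix_mul hρ).matrix_trace

theorem continuous_Ypur (N : ℕ) : Continuous (Ypur N) := by
  rw [funext (Ypur_eq_Xpur_swapGate_mul N)]
  exact (continuous_Xpur N).comp (continuous_const.matrix_mul continuous_id)

theorem isCompact_unitaryGroup {𝕜 n : Type*} [RCLike 𝕜] [Fintype n] [DecidableEq n] :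
    IsCompact (unitaryGroup n 𝕜 : Set (Matrix n n 𝕜)) :=
  (isCompact_univ_pi fun _ => isCompact_univ_pi fun _ =>
    isCompact_closedBall (0 : 𝕜) 1).of_isClosed_subset (isClosed_unitary (R := Matrix n n 𝕜))
    fun _ hU => Set.mem_univ_pi.2 fun i => Set.mem_univ_pi.2 fun j =>
      mem_closedBall_zero_iff.2 (entry_norm_bound_of_unitary hU i j)

instance {𝕜 n : Type*} [RCLike 𝕜] [Fintype n] [DecidableEq n] :
    CompactSpace (unitaryGroup n 𝕜) :=
  isCompact_iff_compactSpace.mp isCompact_unitaryGroup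

theorem integral_Ypur_eq_integral_Xpur (N : ℕ) (μ : Measure (unitaryGroup (Fin N × Fin N) ℂ))
    [μ.IsMulLeftInvariant] :
    ∫ u : unitaryGroup (Fin N × Fin N) ℂ, Ypur N u ∂μ =
      ∫ u : unitaryGroup (Fin N × Fin N) ℂ, Xpur N u ∂μ := by
  simp only [Ypur_eq_Xpur_swapGate_mul]
  exact integral_mul_left_eq_self (fun u : unitaryGroup (Fin N × Fin N) ℂ => Xpur N u)
    ⟨swapGate N, swapGate_mem_unitaryGroup N⟩

theorem gateTyp_eq_of_two_le {N : ℕ} (hN : 2 ≤ N)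
    (U : Matrix (Fin N × Fin N) (Fin N × Fin N) ℂ) :
    gateTyp N U = (N : ℝ) ^ 2 / ((N : ℝ) ^ 2 - 1) * (Ypur N U - Xpur N U) + 1 := by
  have hN' : (N : ℝ) ^ 2 - 1 ≠ 0 := by
    have : (2 : ℝ) ≤ N := by exact_mod_cast hN
    nlinarith
  have : (N : ℝ) ≠ 0 := by positivity
  rw [gateTyp]
  field_simp

/-- The Haar average of the gate-typicality over `U(N²)` equals `1`. -/
theorem gate_typicality_haar_average (N : ℕ) (hN : 2 ≤ N)
    (μ : Measure (Matrix.unitaryGroup (Fin N × Fin N) ℂ)) [μ.IsHaarMeasure]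
    [IsProbabilityMeasure μ] :
    (∫ u : Matrix.unitaryGroup (Fin N × Fin N) ℂ,
        gateTyp N (u : Matrix (Fin N × Fin N) (Fin N × Fin N) ℂ) ∂μ) = 1 := by
  have hX : Integrable (fun u : unitaryGroup (Fin N × Fin N) ℂ => Xpur N u) μ :=
    ((continuous_Xpur N).comp continuous_subtype_val).integrable_of_hasCompactSupport
      (.of_compactSpace _)
  have hY : Integrable (fun u : unitaryGroup (Fin N × Fin N) ℂ => Ypur N u) μ :=
    ((continuous_Ypur N).comp continuous_subtype_val).integrable_of_hasCompactSupport
      (.of_compactSpace _)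
  have hYX : Integrable (fun u : unitaryGroup (Fin N × Fin N) ℂ =>
      (N : ℝ) ^ 2 / ((N : ℝ) ^ 2 - 1) * (Ypur N u - Xpur N u)) μ :=
    (hY.sub hX).const_mul _
  simp only [gateTyp_eq_of_two_le hN]
  rw [integral_add hYX (integrable_const 1), integral_const_mul,
    integral_sub hY hX, integral_Ypur_eq_integral_Xpur]
  simp
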